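/- arXiv:1909.02057 — 2 statements merged into one kernel-verified Lean document; each statement's English description precedes it below -/
import Mathlib

section
/- For every n ≥ 5, the complement of the cycle C_n has failed power domination number γ̄_p(C̄_n) = 0; that is, every nonempty subset of vertices of the complement of C_n is a power dominating set. -/
/-- The closed neighborhood `N[S]` of a set `S` of vertices: `S` together with
all vertices adjacent to a vertex of `S`. -/
def closedNbhdSet {V : Type*} (G : SimpleGraph V) (S : Set V) : Set V :=
  S ∪ {v | ∃ u ∈ S, G.Adj u v}

/-- The monitored sets `P^i(S)` for power domination:
`P^0(S) = N[S]` and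
`P^{i+1}(S) = P^i(S) ∪ { w : {w} = N[v] \ P^i(S) for some v ∈ P^i(S) }`. -/
def monitored {V : Type*} (G : SimpleGraph V) (S : Set V) : ℕ → Set V
  | 0 => closedNbhdSet G S
  | i + 1 => monitored G S i ∪
      {w | ∃ v ∈ monitored G S i,
        (insert v (G.neighborSet v)) \ monitored G S i = {w}}

/-- The zero-forcing sets `Q^i(S)`:
`Q^0(S) = S` and
`Q^{i+1}(S) = Q^i(S) ∪ { w : {w} = N[v] \ Q^i(S) for some v ∈ Q^i(S) }`. -/
def forced {V : Type*} (G : SimpleGraph V) (S : Set V) : ℕ → Set V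
  | 0 => S
  | i + 1 => forced G S i ∪
      {w | ∃ v ∈ forced G S i,
        (insert v (G.neighborSet v)) \ forced G S i = {w}}

/-- `S` is a power dominating set if the monitored sets eventually cover all vertices. -/
def IsPowerDominatingSet {V : Type*} (G : SimpleGraph V) (S : Set V) : Prop :=
  ∃ i, monitored G S i = Set.univ

/-- `S` is a zero forcing set if the forcing process eventually covers all vertices. -/
def IsZeroForcingSet {V : Type*} (G : SimpleGraph V) (S : Set V) : Prop :=
  ∃ i, forced G S i = Set.univ

/-- The failed power domination number: the maximum cardinality of a set of
vertices that is not a power dominating set. -/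
noncomputable def failedPowerDominationNumber {V : Type*} (G : SimpleGraph V) : ℕ :=
  sSup {k | ∃ S : Set V, ¬ IsPowerDominatingSet G S ∧ S.ncard = k}

/-- The failed zero forcing number: the maximum cardinality of a set of
vertices that is not a zero forcing set. -/
noncomputable def failedZeroForcingNumber {V : Type*} (G : SimpleGraph V) : ℕ :=
  sSup {k | ∃ S : Set V, ¬ IsZeroForcingSet G S ∧ S.ncard = k}

/-
In `C̄ₙ` the closed neighbourhood of `v` is everything except `v - 1` and `v + 1`, so one vertex
`v ∈ S` already monitors all but these two. The vertex `v + 2` is monitored, and of its closed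
neighbourhood (everything except `v + 1` and `v + 3`) only `v - 1` can be unmonitored, so it forces
`v - 1`; symmetrically `v - 2` forces `v + 1`. For `n ≥ 5` the residues `1, 2, 3, 4` are nonzero,
which is all the argument needs.
-/

open SimpleGraph

section PowerDomination

variable {V : Type*} {G : SimpleGraph V} {S : Set V}

theorem failedPowerDominationNumber_eq_zero
    (h : ∀ S : Set V, S.Nonempty → IsPowerDominatingSet G S) :
    failedPowerDominationNumber G = 0 := by
  refine Nat.le_zero.mp (csSup_le' ?_)
  rintro _ ⟨S, hS, rfl⟩
  rw [Set.not_nonempty_iff_eq_empty.mp (mt (h S) hS), Set.ncard_empty]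

theorem insert_neighborSet_subset_monitored_zero {v : V} (hv : v ∈ S) :
    insert v (G.neighborSet v) ⊆ monitored G S 0 := by
  rintro x (rfl | hx)
  · exact Or.inl hv
  · exact Or.inr ⟨v, hv, hx⟩

theorem mem_monitored_succ_of_forces {i : ℕ} {v w : V} (hv : v ∈ monitored G S i)
    (hw : w ∈ insert v (G.neighborSet v))
    (hforce : insert v (G.neighborSet v) \ monitored G S i ⊆ {w}) :
    w ∈ monitored G S (i + 1) := by
  by_cases hwi : w ∈ monitored G S i
  · exact Or.inl hwi
  · exact Or.inr ⟨v, hv, Set.Subset.antisymm hforce (by simpa using ⟨hw, hwi⟩)⟩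

theorem mem_monitored_one_of_diff_subset {v u w : V} (hv : v ∈ S)
    (hu : u ∈ insert v (G.neighborSet v)) (hw : w ∈ insert u (G.neighborSet u))
    (hdiff : insert u (G.neighborSet u) \ insert v (G.neighborSet v) ⊆ {w}) :
    w ∈ monitored G S 1 :=
  have hN := insert_neighborSet_subset_monitored_zero (G := G) hv
  mem_monitored_succ_of_forces (hN hu) hw
    ((Set.sdiff_subset_sdiff_right hN).trans hdiff)

end PowerDomination

theorem SimpleGraph.insert_neighborSet_compl {V : Type*} (G : SimpleGraph V) (v : V) :
    insert v (Gᶜ.neighborSet v) = (G.neighborSet v)ᶜ := by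
  rw [neighborSet_compl, Set.insert_sdiff_singleton,
    Set.insert_eq_of_mem G.notMem_neighborSet_self]

open Fin.CommRing in
theorem isPowerDominatingSet_compl_cycleGraph {n : ℕ} (hn : 3 ≤ n) {S : Set (Fin (n + 2))}
    (hS : S.Nonempty) : IsPowerDominatingSet (cycleGraph (n + 2))ᶜ S := by
  obtain ⟨v, hv⟩ := hS
  have hN : ∀ u x : Fin (n + 2),
      x ∈ insert u ((cycleGraph (n + 2))ᶜ.neighborSet u) ↔ x ≠ u - 1 ∧ x ≠ u + 1 := by
    intro u x
    simp [insert_neighborSet_compl, cycleGraph_neighborSet]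
  have hk : ∀ k : ℕ, 0 < k → k < n + 2 → (k : Fin (n + 2)) ≠ 0 := fun k hk0 hkn h =>
    (Nat.le_of_dvd hk0 (Fin.natCast_eq_zero.mp h)).not_gt hkn
  have h1 : (1 : Fin (n + 2)) ≠ 0 := by exact_mod_cast hk 1 (by omega) (by omega)
  have h2 : (2 : Fin (n + 2)) ≠ 0 := by exact_mod_cast hk 2 (by omega) (by omega)
  have h3 : (3 : Fin (n + 2)) ≠ 0 := by exact_mod_cast hk 3 (by omega) (by omega)
  have h4 : (4 : Fin (n + 2)) ≠ 0 := by exact_mod_cast hk 4 (by omega) (by omega)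
  refine ⟨1, Set.eq_univ_of_forall fun w => ?_⟩
  by_cases hw : w ∈ insert v ((cycleGraph (n + 2))ᶜ.neighborSet v)
  · exact Or.inl (insert_neighborSet_subset_monitored_zero hv hw)
  obtain rfl | rfl : w = v - 1 ∨ w = v + 1 := by rw [hN] at hw; tauto
  · refine mem_monitored_one_of_diff_subset hv (u := v + 2)
      ((hN _ _).2 ⟨fun h => h3 ?_, fun h => h1 ?_⟩)
      ((hN _ _).2 ⟨fun h => h2 ?_, fun h => h4 ?_⟩) ?_
    · linear_combination h
    · linear_combination h
    · linear_combination -h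
    · linear_combination -h
    · rintro x ⟨hxu, hxv⟩
      rw [hN] at hxu hxv
      have : x ≠ v + 1 := fun h => hxu.1 (by linear_combination h)
      exact Set.mem_singleton_iff.2 (by tauto)
  · refine mem_monitored_one_of_diff_subset hv (u := v - 2)
      ((hN _ _).2 ⟨fun h => h1 ?_, fun h => h3 ?_⟩)
      ((hN _ _).2 ⟨fun h => h4 ?_, fun h => h2 ?_⟩) ?_
    · linear_combination -h
    · linear_combination -h
    · linear_combination h
    · linear_combination h
    · rintro x ⟨hxu, hxv⟩
      rw [hN] at hxu hxv
      have : x ≠ v - 1 := fun h => hxu.2 (by linear_combination h)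
      exact Set.mem_singleton_iff.2 (by tauto)

theorem failedPowerDominationNumber_compl_cycleGraph (n : ℕ) (hn : 5 ≤ n) :
    failedPowerDominationNumber (SimpleGraph.cycleGraph n)ᶜ = 0 := by
  obtain ⟨m, rfl⟩ : ∃ m, n = m + 2 := ⟨n - 2, by omega⟩
  exact failedPowerDominationNumber_eq_zero fun S =>
    isPowerDominatingSet_compl_cycleGraph (by omega)
end

section
/- Let n ≥ 4, i ≥ 3 and k ≥ 1 with i + k ≤ n − 1. Let G be the graph obtained from the cycle C_n = v_1 v_2 … v_n v_1 by adding the k chords {v_1, v_i}, {v_1, v_{i+1}}, …, {v_1, v_{i+k−1}}. Then γ̄_p(G) = 0; that is, every nonempty subset of vertices of G is a power dominating set. -/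
/-- The cycle `C_n = v_1 v_2 … v_n v_1` (vertex `v_j` is `(j-1 : Fin n)`) together
with the `k` chords `{v_1, v_i}, {v_1, v_{i+1}}, …, {v_1, v_{i+k-1}}`. -/
def cycleWithChords (n i k : ℕ) : SimpleGraph (Fin n) :=
  SimpleGraph.fromRel (fun a b =>
    ((a : ℕ) + 1) % n = (b : ℕ) ∨
    ((a : ℕ) = 0 ∧ i ≤ (b : ℕ) + 1 ∧ (b : ℕ) + 2 ≤ i + k))


/-!
Call a set of vertices forcing-closed if none of its vertices has exactly one neighbour outside
it. In a finite graph the monitored sets of `S` stabilise, at a forcing-closed set containing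
`N[S]`, so it suffices to show that the only forcing-closed set containing `N[v]` is everything.

All chords meet `v_1`, so any other vertex has, besides its two cycle neighbours, at most `v_1`
as a neighbour, and forcing proceeds freely along the cycle wherever that extra neighbour is
absent or already monitored. If `v` lies below the chords, forcing runs down from `v` to `v_1`;
if above, it runs up from `v` to `v_n` and then `v_1`; otherwise `v_1 ∈ N[v]`. Once `v_1` is
monitored it runs down to `v_2`, and from `v_1, v_2` it goes around the whole cycle.
-/

section Forcing

variable {V : Type*} (G : SimpleGraph V)

def IsForcingClosed (M : Set V) : Prop :=
  ∀ u ∈ M, ∀ w, G.Adj u w → (∀ x, G.Adj u x → x = w ∨ x ∈ M) → w ∈ M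

lemma monitored_mono (S : Set V) : Monotone (monitored G S) :=
  monotone_nat_of_le_succ fun _ => Set.subset_union_left

lemma closedNbhdSet_mono {S T : Set V} (h : S ⊆ T) : closedNbhdSet G S ⊆ closedNbhdSet G T :=
  Set.union_subset_union h fun _ ⟨u, hu, hadj⟩ => ⟨u, h hu, hadj⟩

lemma closedNbhdSet_subset_monitored (S : Set V) (t : ℕ) :
    closedNbhdSet G S ⊆ monitored G S t :=
  monitored_mono G S t.zero_le

lemma isForcingClosed_monitored_of_succ_eq {S : Set V} {t : ℕ}
    (h : monitored G S (t + 1) = monitored G S t) : IsForcingClosed G (monitored G S t) := by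
  intro u hu w huw hnbr
  rw [← h]
  by_cases hw : w ∈ monitored G S t
  · exact Or.inl hw
  refine Or.inr ⟨u, hu, Set.eq_singleton_iff_unique_mem.2 ⟨⟨Or.inr huw, hw⟩, ?_⟩⟩
  rintro x ⟨rfl | hx, hxM⟩
  · exact absurd hu hxM
  · exact (hnbr x hx).resolve_right hxM

lemma exists_isForcingClosed_monitored [Finite V] (S : Set V) :
    ∃ t, IsForcingClosed G (monitored G S t) := by
  obtain ⟨t, ht⟩ := WellFoundedGT.monotone_chain_condition ⟨monitored G S, monitored_mono G S⟩
  exact ⟨t, isForcingClosed_monitored_of_succ_eq G (ht (t + 1) t.le_succ).symm⟩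

variable {G}

lemma IsForcingClosed.mem_of_chain {M : Set V} (hM : IsForcingClosed G M) {p : ℕ → V} {d : ℕ}
    (h0 : p 0 ∈ M) (h1 : p 1 ∈ M) (hadj : ∀ j < d, G.Adj (p (j + 1)) (p (j + 2)))
    (hnbr : ∀ j < d, ∀ x, G.Adj (p (j + 1)) x → x = p j ∨ x = p (j + 2) ∨ x ∈ M) :
    ∀ j ≤ d + 1, p j ∈ M := by
  have hpair : ∀ j ≤ d, p j ∈ M ∧ p (j + 1) ∈ M := by
    intro j hj
    induction j with
    | zero => exact ⟨h0, h1⟩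
    | succ j ih =>
      obtain ⟨hj, hj'⟩ := ih (by omega)
      refine ⟨hj', hM _ hj' _ (hadj j (by omega)) fun x hx => ?_⟩
      rcases hnbr j (by omega) x hx with rfl | rfl | hx
      · exact Or.inr hj
      · exact Or.inl rfl
      · exact Or.inr hx
  rintro (_ | j) hj
  · exact h0
  · exact (hpair j (by omega)).2

end Forcing

lemma Nat.add_one_mod_of_lt {m n : ℕ} (hm : m < n) :
    (m + 1) % n = m + 1 ∨ (m + 1 = n ∧ (m + 1) % n = 0) := by
  rcases Nat.lt_or_ge (m + 1) n with h | h
  · exact Or.inl (Nat.mod_eq_of_lt h)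
  · obtain rfl : m + 1 = n := by omega
    exact Or.inr ⟨rfl, Nat.mod_self _⟩

section CycleWithChords

open Fin.NatCast

variable {n i k : ℕ} [NeZero n]

lemma cycleWithChords_adj_natCast_succ (hn : 2 ≤ n) {m : ℕ} (hm : m < n) :
    (cycleWithChords n i k).Adj (m : Fin n) ((m + 1 : ℕ) : Fin n) := by
  simp only [cycleWithChords, SimpleGraph.fromRel_adj, Ne, Fin.ext_iff, Fin.val_natCast,
    Nat.mod_eq_of_lt hm, true_or, and_true]
  have := Nat.add_one_mod_of_lt hm
  omega

lemma eq_of_cycleWithChords_adj_natCast {m : ℕ} (hm0 : 0 < m) (hm : m < n) {x : Fin n}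
    (h : (cycleWithChords n i k).Adj (m : Fin n) x) :
    x = ((m - 1 : ℕ) : Fin n) ∨ x = ((m + 1 : ℕ) : Fin n) ∨
      (x = 0 ∧ i ≤ m + 1 ∧ m + 2 ≤ i + k) := by
  rw [cycleWithChords, SimpleGraph.fromRel_adj, Fin.val_cast_of_lt hm] at h
  have := Nat.add_one_mod_of_lt x.isLt
  simp only [Fin.ext_iff, Fin.val_natCast, Fin.val_zero, Nat.mod_eq_of_lt (by omega : m - 1 < n)]
  omega

lemma eq_univ_of_zero_mem_of_one_mem (hn : 2 ≤ n) {M : Set (Fin n)}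
    (hM : IsForcingClosed (cycleWithChords n i k) M) (h0 : (0 : Fin n) ∈ M) (h1 : (1 : Fin n) ∈ M) :
    M = Set.univ := by
  have hchain := hM.mem_of_chain (p := fun j => (j : Fin n)) (d := n - 2)
    (by simpa using h0) (by simpa using h1)
    (fun j hj => cycleWithChords_adj_natCast_succ hn (by omega))
    (fun j hj x hx => by
      rcases eq_of_cycleWithChords_adj_natCast (by omega) (by omega) hx with rfl | rfl | ⟨rfl, -⟩
      · exact Or.inl rfl
      · exact Or.inr (Or.inl rfl)
      · exact Or.inr (Or.inr h0))
  refine Set.eq_univ_of_forall fun x => ?_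
  simpa using hchain x (by omega)

lemma cycleWithChords_zero_adj {v : Fin n} (hv : v ≠ 0) (hi : i ≤ (v : ℕ) + 1)
    (hk : (v : ℕ) + 2 ≤ i + k) : (cycleWithChords n i k).Adj 0 v := by
  rw [cycleWithChords, SimpleGraph.fromRel_adj]
  exact ⟨hv.symm, Or.inl (Or.inr ⟨Fin.val_zero n, hi, hk⟩)⟩

lemma eq_univ_of_sweep_down (hn : 2 ≤ n) {M : Set (Fin n)}
    (hM : IsForcingClosed (cycleWithChords n i k) M) {v : Fin n} (hvM : v ∈ M)
    (hN : ∀ x, (cycleWithChords n i k).Adj v x → x ∈ M) (hv0 : v ≠ 0)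
    (h : (0 : Fin n) ∈ M ∨ (v : ℕ) + 2 ≤ i) : M = Set.univ := by
  set a := (v : ℕ)
  have hva : ((a : ℕ) : Fin n) = v := Fin.cast_val_eq_self v
  have ha : 0 < a := Nat.pos_of_ne_zero (Fin.val_ne_zero_iff.2 hv0)
  have hchain := hM.mem_of_chain (p := fun j => ((a - j : ℕ) : Fin n)) (d := a - 1)
    (by simpa [hva] using hvM)
    (hN _ (by
      have := cycleWithChords_adj_natCast_succ (i := i) (k := k) hn (m := a - 1) (by omega)
      rw [Nat.sub_add_cancel ha, hva] at this
      exact this.symm))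
    (fun j hj => by
      have := cycleWithChords_adj_natCast_succ (i := i) (k := k) hn (m := a - (j + 2)) (by omega)
      rw [show a - (j + 2) + 1 = a - (j + 1) by omega] at this
      exact this.symm)
    (fun j hj x hx => by
      rcases eq_of_cycleWithChords_adj_natCast (by omega) (by omega) hx with
        rfl | rfl | ⟨rfl, hi, -⟩
      · exact Or.inr (Or.inl (congrArg _ (by omega)))
      · exact Or.inl (congrArg _ (by omega))
      · exact Or.inr (Or.inr (h.resolve_right (by omega))))
  have h1 := hchain (a - 1) (by omega)
  rw [show a - (a - 1) = 1 by omega, Nat.cast_one] at h1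
  exact eq_univ_of_zero_mem_of_one_mem hn hM (by simpa using hchain a (by omega)) h1

lemma zero_mem_of_sweep_up (hn : 2 ≤ n) {M : Set (Fin n)}
    (hM : IsForcingClosed (cycleWithChords n i k) M) {v : Fin n} (hvM : v ∈ M)
    (hN : ∀ x, (cycleWithChords n i k).Adj v x → x ∈ M) (h : i + k ≤ (v : ℕ) + 1) :
    (0 : Fin n) ∈ M := by
  set a := (v : ℕ)
  have hva : ((a : ℕ) : Fin n) = v := Fin.cast_val_eq_self v
  have hchain := hM.mem_of_chain (p := fun j => ((a + j : ℕ) : Fin n)) (d := n - 1 - a)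
    (by simpa [hva] using hvM)
    (hN _ (by simpa [hva] using cycleWithChords_adj_natCast_succ (i := i) (k := k) hn v.isLt))
    (fun j hj => cycleWithChords_adj_natCast_succ hn (by omega))
    (fun j hj x hx => by
      rcases eq_of_cycleWithChords_adj_natCast (by omega) (by omega) hx with
        rfl | rfl | ⟨rfl, -, hk⟩
      · exact Or.inl (congrArg _ (by omega))
      · exact Or.inr (Or.inl rfl)
      · omega)
  simpa [show a + (n - a) = n by omega] using hchain (n - a) (by omega)

lemma eq_univ_of_closedNbhdSet_subset (hn : 2 ≤ n) {M : Set (Fin n)}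
    (hM : IsForcingClosed (cycleWithChords n i k) M) {v : Fin n}
    (hv : closedNbhdSet (cycleWithChords n i k) {v} ⊆ M) : M = Set.univ := by
  have hvM : v ∈ M := hv (Or.inl rfl)
  have hN : ∀ x, (cycleWithChords n i k).Adj v x → x ∈ M := fun x hx => hv (Or.inr ⟨v, rfl, hx⟩)
  rcases eq_or_ne v 0 with rfl | hv0
  · refine eq_univ_of_zero_mem_of_one_mem hn hM hvM (hN 1 ?_)
    simpa using cycleWithChords_adj_natCast_succ (i := i) (k := k) hn (m := 0) (by omega)
  refine eq_univ_of_sweep_down hn hM hvM hN hv0 ?_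
  by_cases hbelow : (v : ℕ) + 2 ≤ i
  · exact Or.inr hbelow
  by_cases habove : i + k ≤ (v : ℕ) + 1
  · exact Or.inl (zero_mem_of_sweep_up hn hM hvM hN habove)
  exact Or.inl (hN 0 (cycleWithChords_zero_adj hv0 (by omega) (by omega)).symm)

end CycleWithChords

theorem failedPowerDominationNumber_cycleWithChords_general
    (n i k : ℕ) (hn : 4 ≤ n) :
    failedPowerDominationNumber (cycleWithChords n i k) = 0 := by
  have : NeZero n := ⟨by omega⟩
  refine Nat.eq_zero_of_le_zero (csSup_le' ?_)
  rintro _ ⟨S, hS, rfl⟩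
  by_contra hS0
  obtain ⟨v, hv⟩ := Set.nonempty_of_ncard_ne_zero (by omega : S.ncard ≠ 0)
  obtain ⟨t, ht⟩ := exists_isForcingClosed_monitored (cycleWithChords n i k) S
  refine hS ⟨t, eq_univ_of_closedNbhdSet_subset (by omega) ht (v := v) ?_⟩
  exact (closedNbhdSet_mono _ (Set.singleton_subset_iff.2 hv)).trans
    (closedNbhdSet_subset_monitored _ S t)

theorem failedPowerDominationNumber_cycleWithChords
    (n i k : ℕ) (hn : 4 ≤ n) (hi : 3 ≤ i) (hk : 1 ≤ k) (hik : i + k + 1 ≤ n) :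
    failedPowerDominationNumber (cycleWithChords n i k) = 0 :=
  failedPowerDominationNumber_cycleWithChords_general n i k hn
end
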